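/- arXiv:1211.3963 — 8 statements merged into one kernel-verified Lean document; each statement's English description precedes it below -/
import Mathlib

section
/- Let a be a nonzero real number and n a natural number. Define G : ℝ → ℝ by G(x) = -Σ_{k=0}^{n} (n!/(n-k)!) · x^{n-k}/a^{k+1} · cos(a x + kπ/2). Then for every real x, G has derivative G'(x) = x^n · sin(a x). -/
/-!
Since `d/dx cos (a x + θ) = a cos (a x + θ + π/2)`, the derivative of the `k`-th summand
`n!/(n-k)! · x^(n-k) / a^(k+1) · cos (a x + kπ/2)` is `W k - W (k+1)` with
`W k = n!/(n-k)! · x^(n-k) / a^k · cos (a x + (k+1)π/2)`. The sum therefore telescopes to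
`W 0 - W (n+1) = -x^n sin (a x)`.
-/

open Real

theorem Nat.cast_factorial_div_factorial_sub {n k : ℕ} (hk : k ≤ n) :
    (n.factorial : ℝ) / ((n - k).factorial : ℝ) = n.descFactorial k := by
  rw [div_eq_iff (by positivity), ← Nat.factorial_mul_descFactorial hk]
  push_cast
  ring

theorem Real.hasDerivAt_cos_mul_add (a θ x : ℝ) :
    HasDerivAt (fun y ↦ cos (a * y + θ)) (a * cos (a * x + θ + π / 2)) x := by
  have := ((hasDerivAt_id x).const_mul a).add_const θ |>.cos
  simpa [cos_add_pi_div_two, mul_comm] using this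

namespace PowMulSinAntideriv

variable (a : ℝ) (n : ℕ)

/- `n.descFactorial k` stands for `n!/(n-k)!`; unlike the latter (with truncated
subtraction) it vanishes for `k > n`, which kills the boundary term `telescopingTerm a n (n + 1)`. -/

noncomputable def summand (k : ℕ) (y : ℝ) : ℝ :=
  n.descFactorial k * y ^ (n - k) / a ^ (k + 1) * cos (a * y + k * π / 2)

noncomputable def telescopingTerm (k : ℕ) (y : ℝ) : ℝ :=
  n.descFactorial k * y ^ (n - k) / a ^ k * cos (a * y + (k + 1) * π / 2)

variable {a}

theorem hasDerivAt_summand (ha : a ≠ 0) (k : ℕ) (x : ℝ) :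
    HasDerivAt (summand a n k)
      (telescopingTerm a n k x - telescopingTerm a n (k + 1) x) x := by
  have h := ((hasDerivAt_pow (n - k) x).mul (hasDerivAt_cos_mul_add a (k * π / 2) x)).const_mul
    ((n.descFactorial k : ℝ) / a ^ (k + 1))
  have hcos : cos (a * x + ((k + 1 : ℕ) + 1) * π / 2) = -cos (a * x + k * π / 2) := by
    rw [← cos_add_pi]
    push_cast
    ring_nf
  have hfun : summand a n k = fun y ↦
      (n.descFactorial k : ℝ) / a ^ (k + 1) * (y ^ (n - k) * cos (a * y + k * π / 2)) := by
    ext y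
    simp only [summand]
    ring
  rw [hfun]
  refine h.congr_deriv ?_
  simp only [telescopingTerm, hcos, Nat.descFactorial_succ, Nat.cast_mul,
      show n - (k + 1) = n - k - 1 by omega]
  field_simp
  ring_nf

theorem telescopingTerm_zero (x : ℝ) : telescopingTerm a n 0 x = -(x ^ n * sin (a * x)) := by
  simp [telescopingTerm, cos_add_pi_div_two]

theorem telescopingTerm_succ_self (x : ℝ) : telescopingTerm a n (n + 1) x = 0 := by
  simp [telescopingTerm]

theorem hasDerivAt_neg_sum_summand (ha : a ≠ 0) (x : ℝ) :
    HasDerivAt (fun y ↦ -∑ k ∈ Finset.range (n + 1), summand a n k y)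
      (x ^ n * sin (a * x)) x := by
  have h := (HasDerivAt.fun_sum (u := Finset.range (n + 1))
    fun k _ ↦ hasDerivAt_summand n ha k x).neg
  rwa [Finset.sum_range_sub', telescopingTerm_zero, telescopingTerm_succ_self, sub_zero,
    neg_neg] at h

end PowMulSinAntideriv

/-- Corrected version of Gradshteyn–Ryzhik 2.633.6: an antiderivative of `x^n * sin(a x)`. -/
theorem stmt1 (a : ℝ) (ha : a ≠ 0) (n : ℕ) (G : ℝ → ℝ)
    (hG : ∀ x : ℝ, G x =
      -∑ k ∈ Finset.range (n + 1),
          ((n.factorial : ℝ) / ((n - k).factorial : ℝ)) * x ^ (n - k) / a ^ (k + 1) *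
            Real.cos (a * x + k * Real.pi / 2)) :
    ∀ x : ℝ, HasDerivAt G (x ^ n * Real.sin (a * x)) x := by
  have hG' : G = fun y ↦ -∑ k ∈ Finset.range (n + 1), PowMulSinAntideriv.summand a n k y := by
    ext y
    rw [hG]
    refine congrArg _ (Finset.sum_congr rfl fun k hk ↦ ?_)
    rw [PowMulSinAntideriv.summand,
      Nat.cast_factorial_div_factorial_sub (Finset.mem_range_succ_iff.mp hk)]
  exact hG' ▸ PowMulSinAntideriv.hasDerivAt_neg_sum_summand n ha
end

section
/- For all natural numbers m, n with n ≥ 1 and every real u, ∫_{0}^{u} x^m · e^{i x^n} dx = Σ_{l=0}^{∞} i^l · u^{m+nl+1} / ((m+nl+1)·l!), where the series of complex numbers on the right converges. -/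
/-!
Expand `exp (c x^n)` in its power series and integrate termwise. The terms are dominated by
`‖c‖^l |x|^(m+nl) / l!`, whose sum `|x|^m exp (‖c‖ |x|^n)` is continuous, so dominated
convergence justifies the interchange.
-/

open Nat NormedSpace intervalIntegral

theorem hasSum_pow_mul_exp_mul_pow {𝔸 : Type*} [NormedField 𝔸] [NormedAlgebra ℚ 𝔸]
    [CompleteSpace 𝔸] (c x : 𝔸) (m n : ℕ) :
    HasSum (fun l : ℕ => c ^ l * x ^ (m + n * l) / l !) (x ^ m * exp (c * x ^ n)) :=
  ((expSeries_div_hasSum_exp (c * x ^ n)).mul_left (x ^ m)).congr_fun fun l => by ring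

theorem integral_ofReal_pow (k : ℕ) (u : ℝ) :
    ∫ x in (0 : ℝ)..u, (x : ℂ) ^ k = (u : ℂ) ^ (k + 1) / ((k + 1 : ℕ) : ℂ) := by
  have := congrArg ((↑) : ℝ → ℂ) (integral_pow (a := 0) (b := u) k)
  push_cast [← integral_ofReal] at this ⊢
  simpa using this

theorem hasSum_integral_pow_mul_exp_mul_pow (c : ℂ) (m n : ℕ) (u : ℝ) :
    HasSum (fun l : ℕ => c ^ l * (u : ℂ) ^ (m + n * l + 1) /
        (((m + n * l + 1 : ℕ) : ℂ) * (l ! : ℂ)))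
      (∫ x in (0 : ℝ)..u, (x : ℂ) ^ m * Complex.exp (c * (x : ℂ) ^ n)) := by
  have hterm (l : ℕ) : ∫ x in (0 : ℝ)..u, c ^ l * (x : ℂ) ^ (m + n * l) / l ! =
      c ^ l * (u : ℂ) ^ (m + n * l + 1) / (((m + n * l + 1 : ℕ) : ℂ) * (l ! : ℂ)) := by
    rw [integral_div, integral_const_mul, integral_ofReal_pow]
    ring
  simp_rw [← hterm]
  refine hasSum_integral_of_dominated_convergence
    (fun l (t : ℝ) => ‖c‖ ^ l * |t| ^ (m + n * l) / l !) (fun l => by fun_prop)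
    (fun l => .of_forall fun t _ => by simp [norm_pow])
    (.of_forall fun t _ => (hasSum_pow_mul_exp_mul_pow ‖c‖ |t| m n).summable) ?_
    (.of_forall fun t _ => by
      simpa [Complex.exp_eq_exp_ℂ] using hasSum_pow_mul_exp_mul_pow c (t : ℂ) m n)
  simp_rw [(hasSum_pow_mul_exp_mul_pow ‖c‖ _ m n).tsum_eq, ← Real.exp_eq_exp_ℝ]
  exact (by fun_prop : Continuous _).intervalIntegrable _ _

theorem stmt4_general (m n : ℕ) (u : ℝ) :
    Summable (fun l : ℕ => Complex.I ^ l * (u : ℂ) ^ (m + n * l + 1) /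
        (((m + n * l + 1 : ℕ) : ℂ) * (l.factorial : ℂ))) ∧
    ∫ x in (0:ℝ)..u, (x : ℂ) ^ m * Complex.exp (Complex.I * (x : ℂ) ^ n) =
      ∑' l : ℕ, Complex.I ^ l * (u : ℂ) ^ (m + n * l + 1) /
        (((m + n * l + 1 : ℕ) : ℂ) * (l.factorial : ℂ)) :=
  have h := hasSum_integral_pow_mul_exp_mul_pow Complex.I m n u
  ⟨h.summable, h.tsum_eq.symm⟩

/-- Termwise integration of the exponential series for `∫ x^m exp(i x^n) dx`. -/
theorem stmt4 (m n : ℕ) (hn : 1 ≤ n) (u : ℝ) :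
    Summable (fun l : ℕ => Complex.I ^ l * (u : ℂ) ^ (m + n * l + 1) /
        (((m + n * l + 1 : ℕ) : ℂ) * (l.factorial : ℂ))) ∧
    ∫ x in (0:ℝ)..u, (x : ℂ) ^ m * Complex.exp (Complex.I * (x : ℂ) ^ n) =
      ∑' l : ℕ, Complex.I ^ l * (u : ℂ) ^ (m + n * l + 1) /
        (((m + n * l + 1 : ℕ) : ℂ) * (l.factorial : ℂ)) :=
  stmt4_general m n u
end

section
/- For all natural numbers m, n with n ≥ 1 and every real u, ∫_{0}^{u} x^m · sin(x^n) dx = Σ_{l=0}^{∞} (-1)^l · u^{m+2nl+n+1} / ((m+2nl+n+1)·(2l+1)!), where the series on the right converges. -/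
/-!
On `[0, u]` the terms of `x ^ m * sin (x ^ n) = ∑ (-1) ^ l x ^ (m + 2nl + n) / (2l + 1)!` are
dominated by the constants `|u| ^ (m + 2nl + n) / (2l + 1)!`, the terms of the series of
`|u| ^ m * sinh (|u| ^ n)`. Dominated convergence therefore lets us integrate termwise, and the
monomial `x ^ k` integrates to `u ^ (k + 1) / (k + 1)`.
-/

open Nat Set

theorem hasSum_intervalIntegral_of_hasSum_monomial {a : ℕ → ℝ} {k : ℕ → ℕ} {f : ℝ → ℝ} {u : ℝ}
    (hf : ∀ x ∈ uIcc 0 u, HasSum (fun l => a l * x ^ k l) (f x))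
    (ha : Summable fun l => |a l| * |u| ^ k l) :
    HasSum (fun l => a l * u ^ (k l + 1) / (k l + 1)) (∫ x in (0 : ℝ)..u, f x) := by
  have hmonomial : ∀ l, ∫ x in (0 : ℝ)..u, a l * x ^ k l = a l * u ^ (k l + 1) / (k l + 1) :=
    fun l => by simp [integral_pow, mul_div_assoc]
  simp only [← hmonomial]
  refine intervalIntegral.hasSum_integral_of_dominated_convergence (fun l _ => |a l| * |u| ^ k l)
    (fun l => (by fun_prop : Continuous fun x : ℝ => a l * x ^ k l).aestronglyMeasurable)
    (fun l => .of_forall fun x hx => ?_) (.of_forall fun _ _ => ha) intervalIntegrable_const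
    (.of_forall fun x hx => hf x (uIoc_subset_uIcc hx))
  have hxu : |x| ≤ |u| := by simpa using abs_sub_left_of_mem_uIcc (uIoc_subset_uIcc hx)
  rw [norm_mul, norm_pow, Real.norm_eq_abs, Real.norm_eq_abs]
  gcongr

theorem Real.hasSum_pow_mul_sin_pow (m n : ℕ) (x : ℝ) :
    HasSum (fun l : ℕ => (-1) ^ l / (2 * l + 1)! * x ^ (m + 2 * n * l + n))
      (x ^ m * Real.sin (x ^ n)) := by
  refine ((Real.hasSum_sin (x ^ n)).mul_left (x ^ m)).congr_fun fun l => ?_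
  rw [← pow_mul, show m + 2 * n * l + n = m + n * (2 * l + 1) by ring, pow_add]
  ring

theorem Real.summable_abs_pow_mul_sin_pow_series (m n : ℕ) (r : ℝ) :
    Summable fun l : ℕ => |(-1) ^ l / ((2 * l + 1)! : ℝ)| * |r| ^ (m + 2 * n * l + n) := by
  refine ((Real.hasSum_sinh (|r| ^ n)).mul_left (|r| ^ m)).summable.congr fun l => ?_
  rw [abs_div, abs_pow, abs_neg, abs_one, one_pow, Nat.abs_cast, ← pow_mul,
    show m + 2 * n * l + n = m + n * (2 * l + 1) by ring, pow_add]
  ring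

theorem stmt5_general (m n : ℕ) (u : ℝ) :
    Summable (fun l : ℕ => (-1 : ℝ) ^ l * u ^ (m + 2 * n * l + n + 1) /
        (((m + 2 * n * l + n + 1 : ℕ) : ℝ) * ((2 * l + 1).factorial : ℝ))) ∧
    ∫ x in (0:ℝ)..u, x ^ m * Real.sin (x ^ n) =
      ∑' l : ℕ, (-1 : ℝ) ^ l * u ^ (m + 2 * n * l + n + 1) /
        (((m + 2 * n * l + n + 1 : ℕ) : ℝ) * ((2 * l + 1).factorial : ℝ)) := by
  have h := hasSum_intervalIntegral_of_hasSum_monomial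
    (fun x _ => Real.hasSum_pow_mul_sin_pow m n x) (Real.summable_abs_pow_mul_sin_pow_series m n u)
  have hterm : ∀ l : ℕ, (-1 : ℝ) ^ l / (2 * l + 1)! * u ^ (m + 2 * n * l + n + 1) /
      ((m + 2 * n * l + n : ℕ) + 1) = (-1 : ℝ) ^ l * u ^ (m + 2 * n * l + n + 1) /
        (((m + 2 * n * l + n + 1 : ℕ) : ℝ) * ((2 * l + 1)! : ℝ)) := fun l => by
    push_cast
    field_simp
  simp only [hterm] at h
  exact ⟨h.summable, h.tsum_eq.symm⟩

/-- Termwise integration of the Taylor series of `x^m sin(x^n)`. -/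
theorem stmt5 (m n : ℕ) (hn : 1 ≤ n) (u : ℝ) :
    Summable (fun l : ℕ => (-1 : ℝ) ^ l * u ^ (m + 2 * n * l + n + 1) /
        (((m + 2 * n * l + n + 1 : ℕ) : ℝ) * ((2 * l + 1).factorial : ℝ))) ∧
    ∫ x in (0:ℝ)..u, x ^ m * Real.sin (x ^ n) =
      ∑' l : ℕ, (-1 : ℝ) ^ l * u ^ (m + 2 * n * l + n + 1) /
        (((m + 2 * n * l + n + 1 : ℕ) : ℝ) * ((2 * l + 1).factorial : ℝ)) :=
  stmt5_general m n u
end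

section
/- For all natural numbers m, n with n ≥ 1 and every real u, ∫_{0}^{u} x^m · e^{i x^n} dx = e^{i u^n} · Σ_{k=0}^{∞} (−i·n)^k · u^{m+1+nk} / ∏_{j=0}^{k} (m+1+j·n), where the series of complex numbers converges. -/
/-!
Write `J_p(u) = ∫₀ᵘ x^p e^{i xⁿ} dx`. Integrating `d/dx (x^{p+1} e^{i xⁿ})` gives
`(p+1) J_p = u^{p+1} e^{i uⁿ} - i n J_{p+n}`; iterating this `K` times writes `J_m` as `e^{i uⁿ}`
times the `K`-th partial sum of the series plus the remainder `c_K J_{m+nK}`, where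
`c_K = (-i n)^K / ∏_{j<K} (m+1+jn)`. Both the `k`-th term and the `k`-th remainder are bounded by
`‖c_k‖ |u|^{m+1+nk}`, whose consecutive ratios `n |u|ⁿ / (m+1+kn)` tend to `0`; so the series
converges and the remainders tend to `0`.
-/

open Complex Finset Filter Topology

noncomputable def powExpIntegral (p n : ℕ) (u : ℝ) : ℂ :=
  ∫ x in (0:ℝ)..u, (x : ℂ) ^ p * exp (I * (x : ℂ) ^ n)

theorem hasDerivAt_pow_succ_mul_exp (p n : ℕ) (x : ℝ) :
    HasDerivAt (fun y : ℝ => (y : ℂ) ^ (p + 1) * exp (I * (y : ℂ) ^ n))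
      ((p + 1) * ((x : ℂ) ^ p * exp (I * (x : ℂ) ^ n))
        + I * n * ((x : ℂ) ^ (p + n) * exp (I * (x : ℂ) ^ n))) x := by
  have h := (((hasDerivAt_pow (p + 1) (x : ℂ))).mul
    ((hasDerivAt_pow n (x : ℂ)).const_mul I).cexp).comp_ofReal
  convert h using 1
  · rfl
  rcases n with _ | n
  · simp [mul_assoc]
  · push_cast
    ring

theorem powExpIntegral_ibp (p n : ℕ) (u : ℝ) :
    (p + 1) * powExpIntegral p n u
      = (u : ℂ) ^ (p + 1) * exp (I * (u : ℂ) ^ n) - I * n * powExpIntegral (p + n) n u := by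
  have hint (q : ℕ) : IntervalIntegrable (fun x : ℝ => (x : ℂ) ^ q * exp (I * (x : ℂ) ^ n))
      MeasureTheory.volume 0 u :=
    (by fun_prop : Continuous _).intervalIntegrable 0 u
  have hFTC := intervalIntegral.integral_eq_sub_of_hasDerivAt
    (fun x _ => hasDerivAt_pow_succ_mul_exp p n x) (((hint p).const_mul _).add ((hint _).const_mul _))
  rw [intervalIntegral.integral_add ((hint p).const_mul _) ((hint _).const_mul _),
    intervalIntegral.integral_const_mul, intervalIntegral.integral_const_mul] at hFTC
  simp only [powExpIntegral]
  simp only [ofReal_zero, ne_eq, Nat.add_eq_zero_iff, one_ne_zero, and_false, not_false_eq_true,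
    zero_pow, zero_mul, sub_zero] at hFTC
  linear_combination hFTC

theorem norm_powExpIntegral_le (p n : ℕ) (u : ℝ) : ‖powExpIntegral p n u‖ ≤ |u| ^ (p + 1) := by
  have h := intervalIntegral.norm_integral_le_of_norm_le_const (a := 0) (b := u) (C := |u| ^ p)
    (f := fun x : ℝ => (x : ℂ) ^ p * exp (I * (x : ℂ) ^ n)) fun x hx => ?_
  · simpa [powExpIntegral, pow_succ] using h
  · have hxu : |x| ≤ |u| := by simpa using Set.abs_sub_left_of_mem_uIcc (Set.uIoc_subset_uIcc hx)
    rw [norm_mul, norm_pow, ← ofReal_pow, norm_exp_I_mul_ofReal, mul_one, norm_real, Real.norm_eq_abs]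
    exact pow_le_pow_left₀ (abs_nonneg x) hxu p

noncomputable def kummerCoeff (m n k : ℕ) : ℂ :=
  (-I * n) ^ k / ∏ j ∈ range k, ((m + 1 + j * n : ℕ) : ℂ)

noncomputable def kummerTerm (m n : ℕ) (u : ℝ) (k : ℕ) : ℂ :=
  (-I * n) ^ k * (u : ℂ) ^ (m + 1 + n * k) / ∏ j ∈ range (k + 1), ((m + 1 + j * n : ℕ) : ℂ)

noncomputable def kummerMajorant (m n : ℕ) (u : ℝ) (k : ℕ) : ℝ :=
  ‖kummerCoeff m n k‖ * |u| ^ (m + 1 + n * k)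

section

variable (m n : ℕ) (u : ℝ)

theorem kummerCoeff_zero : kummerCoeff m n 0 = 1 := by
  simp [kummerCoeff]

theorem kummerCoeff_succ (k : ℕ) :
    kummerCoeff m n (k + 1) = kummerCoeff m n k * (-I * n / (m + 1 + k * n : ℕ)) := by
  simp only [kummerCoeff, pow_succ, prod_range_succ, div_mul_div_comm]

theorem kummerTerm_eq (k : ℕ) :
    kummerTerm m n u k = kummerCoeff m n k * (u : ℂ) ^ (m + 1 + n * k) / (m + 1 + k * n : ℕ) := by
  simp only [kummerTerm, kummerCoeff, prod_range_succ]
  ring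

theorem exp_mul_sum_kummerTerm_add (K : ℕ) :
    exp (I * (u : ℂ) ^ n) * ∑ k ∈ range K, kummerTerm m n u k
      + kummerCoeff m n K * powExpIntegral (m + n * K) n u = powExpIntegral m n u := by
  induction K with
  | zero => simp [kummerCoeff_zero]
  | succ K ih =>
    have hd : ((m + 1 + K * n : ℕ) : ℂ) ≠ 0 := Nat.cast_ne_zero.mpr (by omega)
    have hibp := powExpIntegral_ibp (m + n * K) n u
    rw [show m + n * K + 1 = m + 1 + n * K by ring, show m + n * K + n = m + n * (K + 1) by ring]
      at hibp
    rw [← ih, sum_range_succ, kummerCoeff_succ, kummerTerm_eq]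
    field_simp
    push_cast at hibp ⊢
    linear_combination -kummerCoeff m n K * hibp

theorem norm_kummerTerm_le (k : ℕ) : ‖kummerTerm m n u k‖ ≤ kummerMajorant m n u k := by
  rw [kummerTerm_eq, norm_div, norm_mul, norm_pow, norm_real, Real.norm_eq_abs, norm_natCast]
  exact div_le_self (by positivity) (by exact_mod_cast Nat.le_add_right_of_le (by omega))

theorem norm_kummerCoeff_mul_powExpIntegral_le (k : ℕ) :
    ‖kummerCoeff m n k * powExpIntegral (m + n * k) n u‖ ≤ kummerMajorant m n u k := by
  rw [norm_mul, kummerMajorant, show m + 1 + n * k = m + n * k + 1 by ring]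
  exact mul_le_mul_of_nonneg_left (norm_powExpIntegral_le _ _ _) (norm_nonneg _)

theorem kummerMajorant_succ (k : ℕ) :
    kummerMajorant m n u (k + 1) = n * |u| ^ n / (m + 1 + k * n : ℕ) * kummerMajorant m n u k := by
  simp only [kummerMajorant, kummerCoeff_succ, norm_mul, norm_div, norm_neg, norm_natCast,
    Complex.norm_I, one_mul]
  rw [show m + 1 + n * (k + 1) = m + 1 + n * k + n by ring, pow_add]
  ring

theorem summable_kummerMajorant : Summable (kummerMajorant m n u) := by
  refine summable_of_ratio_norm_eventually_le (r := 1 / 2) (by norm_num) ?_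
  filter_upwards [eventually_ge_atTop ⌈2 * |u| ^ n⌉₊] with k hk
  have hratio : n * |u| ^ n / (m + 1 + k * n : ℕ) ≤ 1 / 2 := by
    rw [div_le_iff₀ (by positivity)]
    have := Nat.le_of_ceil_le hk
    push_cast
    nlinarith [(Nat.cast_nonneg n : (0 : ℝ) ≤ n)]
  have hnonneg (i : ℕ) : 0 ≤ kummerMajorant m n u i := by unfold kummerMajorant; positivity
  rw [Real.norm_of_nonneg (hnonneg _), Real.norm_of_nonneg (hnonneg _), kummerMajorant_succ]
  exact mul_le_mul_of_nonneg_right hratio (hnonneg k)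

end

theorem stmt11_general (m n : ℕ) (u : ℝ) :
    Summable (fun k : ℕ => (-Complex.I * (n : ℂ)) ^ k * (u : ℂ) ^ (m + 1 + n * k) /
        ∏ j ∈ Finset.range (k + 1), ((m + 1 + j * n : ℕ) : ℂ)) ∧
    ∫ x in (0:ℝ)..u, (x : ℂ) ^ m * Complex.exp (Complex.I * (x : ℂ) ^ n) =
      Complex.exp (Complex.I * (u : ℂ) ^ n) *
        ∑' k : ℕ, (-Complex.I * (n : ℂ)) ^ k * (u : ℂ) ^ (m + 1 + n * k) /
          ∏ j ∈ Finset.range (k + 1), ((m + 1 + j * n : ℕ) : ℂ) := by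
  change Summable (kummerTerm m n u) ∧
    powExpIntegral m n u = exp (I * (u : ℂ) ^ n) * ∑' k, kummerTerm m n u k
  have hmajorant := summable_kummerMajorant m n u
  have hsummable := Summable.of_norm_bounded hmajorant (norm_kummerTerm_le m n u)
  refine ⟨hsummable, tendsto_nhds_unique ?_ (hsummable.hasSum.tendsto_sum_nat.const_mul _)⟩
  have hremainder : Tendsto (fun K => kummerCoeff m n K * powExpIntegral (m + n * K) n u)
      atTop (𝓝 0) :=
    squeeze_zero_norm (norm_kummerCoeff_mul_powExpIntegral_le m n u) hmajorant.tendsto_atTop_zero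
  have hlimit := (tendsto_const_nhds (x := powExpIntegral m n u)).sub hremainder
  rw [sub_zero] at hlimit
  exact hlimit.congr fun K => (eq_sub_of_add_eq (exp_mul_sum_kummerTerm_add m n u K)).symm

/-- Kummer transformation of the confluent hypergeometric representation of
`∫_0^u x^m exp(i x^n) dx`. -/
theorem stmt11 (m n : ℕ) (hn : 1 ≤ n) (u : ℝ) :
    Summable (fun k : ℕ => (-Complex.I * (n : ℂ)) ^ k * (u : ℂ) ^ (m + 1 + n * k) /
        ∏ j ∈ Finset.range (k + 1), ((m + 1 + j * n : ℕ) : ℂ)) ∧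
    ∫ x in (0:ℝ)..u, (x : ℂ) ^ m * Complex.exp (Complex.I * (x : ℂ) ^ n) =
      Complex.exp (Complex.I * (u : ℂ) ^ n) *
        ∑' k : ℕ, (-Complex.I * (n : ℂ)) ^ k * (u : ℂ) ^ (m + 1 + n * k) /
          ∏ j ∈ Finset.range (k + 1), ((m + 1 + j * n : ℕ) : ℂ) :=
  stmt11_general m n u
end

section
/- Let k be a rational number and let f be a formal power series over ℚ with constant coefficient 0 satisfying f + k·f² = X. Then for every j ≥ 1, the coefficient of f at degree j equals C_{j-1} · (−k)^{j−1}, where C_m = binomial(2m, m)/(m+1) is the m-th Catalan number. -/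
/-!
Writing `c` for the Catalan generating function, `c = 1 + X c²` gives that `g = X c(-k X)`
satisfies `g + k g² = X`. Any two solutions with zero constant term agree, because
`f + k f² - (g + k g²) = (f - g)(1 + k (f + g))` and the second factor is a unit. Hence
`f = g`, whose coefficient of `X^(n+1)` is `catalan n * (-k)^n`.
-/

open PowerSeries

namespace PowerSeries

variable {R : Type*} [CommRing R]

theorem eq_of_add_C_mul_sq_eq {k : R} {f g : R⟦X⟧}
    (hf0 : constantCoeff f = 0) (hg0 : constantCoeff g = 0)
    (h : f + C k * f ^ 2 = g + C k * g ^ 2) : f = g := by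
  have hunit : IsUnit (1 + C k * (f + g)) := by
    simp [isUnit_iff_constantCoeff, hf0, hg0]
  have hfactor : (f - g) * (1 + C k * (f + g)) = 0 := by linear_combination h
  exact sub_eq_zero.mp (hunit.mul_left_eq_zero.mp hfactor)

noncomputable def catalanReversion (k : R) : R⟦X⟧ :=
  X * rescale (-k) (map (Nat.castRingHom R) catalanSeries)

theorem constantCoeff_catalanReversion (k : R) : constantCoeff (catalanReversion k) = 0 := by
  simp [catalanReversion]

theorem coeff_succ_catalanReversion (k : R) (n : ℕ) :
    coeff (n + 1) (catalanReversion k) = catalan n * (-k) ^ n := by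
  simp [catalanReversion, coeff_succ_X_mul, coeff_rescale, mul_comm]

theorem catalanReversion_add_C_mul_sq (k : R) :
    catalanReversion k + C k * catalanReversion k ^ 2 = X := by
  have h := congrArg (fun c => X * rescale (-k) (map (Nat.castRingHom R) c))
    catalanSeries_sq_mul_X_add_one
  simp only [map_add, map_mul, map_pow, map_X, map_one, rescale_X, map_neg] at h
  rw [catalanReversion]
  linear_combination -h

end PowerSeries

theorem cast_catalan_eq_choose_div {K : Type*} [Field K] [CharZero K] (n : ℕ) :
    (catalan n : K) = (Nat.choose (2 * n) n : K) / (n + 1) := by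
  rw [eq_div_iff (Nat.cast_add_one_ne_zero n), mul_comm]
  exact_mod_cast succ_mul_catalan_eq_centralBinom n

/-- The reversion coefficients of `y = x + k x²` are Catalan numbers times powers of `-k`:
`β_j = C_{j-1} (-k)^{j-1}` with `C_m = binomial(2m, m)/(m+1)`. -/
theorem stmt15 (k : ℚ) (f : PowerSeries ℚ)
    (h0 : PowerSeries.constantCoeff f = 0)
    (hf : f + PowerSeries.C k * f ^ 2 = PowerSeries.X) :
    ∀ j : ℕ, 1 ≤ j →
      PowerSeries.coeff j f =
        ((Nat.choose (2 * (j - 1)) (j - 1) : ℚ) / ((j - 1 : ℕ) + 1 : ℚ)) * (-k) ^ (j - 1) := by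
  have hf_eq : f = catalanReversion k :=
    eq_of_add_C_mul_sq_eq h0 (constantCoeff_catalanReversion k)
      (hf.trans (catalanReversion_add_C_mul_sq k).symm)
  rintro j hj
  obtain ⟨n, rfl⟩ := Nat.exists_eq_add_of_le' hj
  rw [hf_eq, coeff_succ_catalanReversion, Nat.add_sub_cancel, cast_catalan_eq_choose_div]
end

section
/- Let f be a formal power series over ℚ with constant coefficient 0 satisfying f + f³ = X. Then the coefficient of f at every even degree is 0, the coefficient at degree 1 is 1, and the coefficients γ_k := (coefficient of f at degree 2k−1) satisfy the two-term recurrence (2k−1)(2k−2)·γ_k + 3(3k−4)(3k−5)·γ_{k−1} = 0 for all k ≥ 2. -/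
/-!
Differentiating `f + f³ = X` gives `f' (1 + 3f²) = 1`, and differentiating once more expresses
`f''` through `f` and `f'`. Eliminating `f` against `X = f + f³` yields the linear ODE
`(4 + 27X²) f'' + 27X f' - 3f = 0`, i.e. `4 f'' + 27 θ²f - 3f = 0` with `θ = X d/dX`. Since `θ` acts
on the `n`-th coefficient as multiplication by `n`, the ODE is the two-term recurrence
`4 (n+2)(n+1) aₙ₊₂ + (27n² - 3) aₙ = 0`; with `a₀ = 0` it kills the even coefficients, and at odd
`n` it is the claimed recurrence for the `γ_k`.
-/

open PowerSeries

namespace PowerSeries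

variable {R : Type*} [CommRing R]

theorem coeff_X_mul_derivative (g : R⟦X⟧) (n : ℕ) :
    coeff n (X * d⁄dX R g) = n * coeff n g := by
  cases n with
  | zero => simp
  | succ n => rw [coeff_succ_X_mul, coeff_derivative, mul_comm]; push_cast; rfl

variable {f : R⟦X⟧}

theorem coeff_one_of_add_pow_three_eq_X (h0 : constantCoeff f = 0) (hf : f + f ^ 3 = X) :
    coeff 1 f = 1 := by
  obtain ⟨g, rfl⟩ := X_dvd_iff.mpr h0
  have h := congrArg (coeff 1) hf
  rw [mul_pow, map_add, show (X : R⟦X⟧) ^ 3 = X * X ^ 2 by ring, mul_assoc,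
    coeff_succ_X_mul, coeff_succ_X_mul, coeff_X_pow_mul', if_neg (by norm_num), add_zero,
    coeff_one_X] at h
  rwa [coeff_succ_X_mul]

theorem derivative_mul_one_add_three_mul_sq (hf : f + f ^ 3 = X) :
    d⁄dX R f * (1 + 3 * f ^ 2) = 1 := by
  have h := congrArg (d⁄dX R) hf
  rw [map_add, derivative_pow, derivative_X] at h
  push_cast at h
  linear_combination h

theorem ode_of_add_pow_three_eq_X (h0 : constantCoeff f = 0) (hf : f + f ^ 3 = X) :
    4 * d⁄dX R (d⁄dX R f) + 27 * (X * d⁄dX R (X * d⁄dX R f)) - 3 * f = 0 := by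
  have hd1 := derivative_mul_one_add_three_mul_sq hf
  have hd2 : d⁄dX R (d⁄dX R f) * (1 + 3 * f ^ 2) + d⁄dX R f * (6 * f * d⁄dX R f) = 0 := by
    have h := congrArg (d⁄dX R) hd1
    have h3 : d⁄dX R (3 : R⟦X⟧) = 0 := by exact_mod_cast (d⁄dX R).map_natCast 3
    simp only [Derivation.leibniz, derivative_pow, map_add, h3, Derivation.map_one_eq_zero,
      smul_eq_mul] at h
    push_cast at h
    linear_combination h
  have hXD : d⁄dX R (X * d⁄dX R f) = d⁄dX R f + X * d⁄dX R (d⁄dX R f) := by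
    rw [Derivation.leibniz, derivative_X, smul_eq_mul, smul_eq_mul]; ring
  have hu : IsUnit ((1 + 3 * f ^ 2) ^ 3) :=
    (isUnit_iff_constantCoeff.mpr (by simp [h0])).pow 3
  -- With `u = 1 + 3f²` we have `f' = u⁻¹` and `f'' = -6f u⁻³`, so `u³` times the ODE is a
  -- polynomial identity in `f` once `X` is replaced by `f + f³`.
  rw [← hu.mul_right_eq_zero, hXD, ← hf]
  linear_combination ((4 + 27 * (f + f ^ 3) ^ 2) * (1 + 3 * f ^ 2) ^ 2) * hd2 +
    (-6 * (4 + 27 * (f + f ^ 3) ^ 2) * f * (d⁄dX R f * (1 + 3 * f ^ 2) + 1) +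
      27 * (f + f ^ 3) * (1 + 3 * f ^ 2) ^ 2) * hd1

theorem coeff_recurrence_of_add_pow_three_eq_X (h0 : constantCoeff f = 0) (hf : f + f ^ 3 = X)
    (n : ℕ) :
    4 * ((n + 2) * (n + 1)) * coeff (n + 2) f + (27 * n ^ 2 - 3) * coeff n f = 0 := by
  have h := congrArg (coeff n) (ode_of_add_pow_three_eq_X h0 hf)
  rw [← map_ofNat C 4, ← map_ofNat C 27, ← map_ofNat C 3] at h
  simp only [map_sub, map_add, map_zero, coeff_C_mul, coeff_X_mul_derivative,
    coeff_derivative] at h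
  push_cast at h
  linear_combination h

theorem coeff_even_eq_zero_of_add_pow_three_eq_X [NoZeroDivisors R] [CharZero R]
    (h0 : constantCoeff f = 0) (hf : f + f ^ 3 = X) (j : ℕ) : coeff (2 * j) f = 0 := by
  induction j with
  | zero => simpa using h0
  | succ j ih =>
    have h := coeff_recurrence_of_add_pow_three_eq_X h0 hf (2 * j)
    rw [ih, mul_zero, add_zero] at h
    exact (mul_eq_zero.mp h).resolve_left (by norm_cast)

end PowerSeries

/-- Reversion of `y = x + x³`: even coefficients vanish, the first coefficient is 1, and the
non-vanishing coefficients `γ_k = β_{2k-1}` satisfy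
`(2k-1)(2k-2) γ_k + 3(3k-4)(3k-5) γ_{k-1} = 0` for `k ≥ 2`. -/
theorem stmt16 (f : PowerSeries ℚ) (h0 : PowerSeries.constantCoeff f = 0)
    (hf : f + f ^ 3 = PowerSeries.X) :
    (∀ j : ℕ, Even j → PowerSeries.coeff j f = 0) ∧
    PowerSeries.coeff 1 f = 1 ∧
    ∀ k : ℕ, 2 ≤ k →
      ((2 * k - 1 : ℕ) : ℚ) * ((2 * k - 2 : ℕ) : ℚ) * PowerSeries.coeff (2 * k - 1) f +
        3 * ((3 * k - 4 : ℕ) : ℚ) * ((3 * k - 5 : ℕ) : ℚ) *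
          PowerSeries.coeff (2 * (k - 1) - 1) f = 0 := by
  refine ⟨?_, coeff_one_of_add_pow_three_eq_X h0 hf, fun k hk => ?_⟩
  · rintro _ ⟨j, rfl⟩
    simpa [two_mul] using coeff_even_eq_zero_of_add_pow_three_eq_X h0 hf j
  obtain ⟨j, rfl⟩ : ∃ j, k = j + 2 := ⟨k - 2, by omega⟩
  have h := coeff_recurrence_of_add_pow_three_eq_X h0 hf (2 * j + 1)
  rw [show 2 * (j + 2) - 1 = 2 * j + 1 + 2 by omega, show 2 * (j + 2 - 1) - 1 = 2 * j + 1 by omega,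
    show 2 * (j + 2) - 2 = 2 * j + 2 by omega, show 3 * (j + 2) - 4 = 3 * j + 2 by omega,
    show 3 * (j + 2) - 5 = 3 * j + 1 by omega]
  push_cast at h ⊢
  linear_combination h / 4
end

section
/- Let f be a formal power series over ℚ with constant coefficient 0 satisfying f + f² + (1/3)·f³ = X. Then for every j ≥ 0, the coefficient of f at degree 2j+1 equals κ_j/3^j and the coefficient at degree 2j+2 equals −λ_j/3^j, where κ_j = 27^j · (5/6)_j · (1/3)_j / ( j! · (3/2)_j ) and λ_j = ((1+3j)/(1+j)) · κ_j, with (a)_j = a(a+1)⋯(a+j−1) the Pochhammer symbol. -/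
/-!
Completing the cube, `f + f² + f³/3 = X` says `(1 + f)³ = 1 + 3X`, i.e. `f = (1 + 3X)^{1/3} - 1`.
Differentiating gives `(1 + 3X) f' = 1 + f`, so the coefficients `c_n` of `f` satisfy
`c₁ = 1` and `(n + 1) c_{n+1} = (1 - 3n) c_n`. Taking two steps of this recurrence at a time
reproduces the hypergeometric recurrence of `κ_j`, with `λ_j` appearing in between.
-/

/-- `κ_j = 27^j (5/6)_j (1/3)_j / (j! (3/2)_j)`, with `(a)_j` the Pochhammer symbol. -/
noncomputable def kappa (j : ℕ) : ℚ :=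
  27 ^ j * Polynomial.eval (5 / 6 : ℚ) (ascPochhammer ℚ j) *
      Polynomial.eval (1 / 3 : ℚ) (ascPochhammer ℚ j) /
    ((j.factorial : ℚ) * Polynomial.eval (3 / 2 : ℚ) (ascPochhammer ℚ j))

/-- `λ_j = ((1+3j)/(1+j)) κ_j`. -/
noncomputable def lambda' (j : ℕ) : ℚ :=
  ((1 + 3 * (j : ℚ)) / (1 + (j : ℚ))) * kappa j

namespace PowerSeries

variable {R : Type*}

theorem mul_derivative_eq_of_pow_eq [CommRing R] [IsDomain R] [CharZero R] {f : R⟦X⟧} {n : ℕ}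
    (hn : n ≠ 0) (h : (1 + f) ^ n = 1 + (n : R⟦X⟧) * X) :
    (1 + (n : R⟦X⟧) * X) * d⁄dX R f = 1 + f := by
  obtain ⟨m, rfl⟩ : ∃ m, n = m + 1 := ⟨n - 1, by omega⟩
  have hderiv :
      ((m + 1 : ℕ) : R⟦X⟧) * ((1 + f) ^ m * d⁄dX R f) = ((m + 1 : ℕ) : R⟦X⟧) * 1 := by
    have := congrArg (d⁄dX R) h
    simpa only [Derivation.leibniz_pow, map_add, map_mul, Derivation.map_one_eq_zero,
      Derivation.map_natCast, derivative_X, Derivation.leibniz, smul_eq_mul, nsmul_eq_mul,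
      zero_add, mul_zero, mul_one, Nat.add_sub_cancel, mul_assoc, add_zero] using this
  have hcast : ((m + 1 : ℕ) : R⟦X⟧) ≠ 0 := fun h0 =>
    Nat.cast_add_one_ne_zero (R := R) m (by simpa using congrArg constantCoeff h0)
  calc (1 + ((m + 1 : ℕ) : R⟦X⟧) * X) * d⁄dX R f
        = (1 + f) * ((1 + f) ^ m * d⁄dX R f) := by rw [← h]; ring
    _ = 1 + f := by rw [mul_left_cancel₀ hcast hderiv, mul_one]

section Coefficients

variable [CommRing R] {f : R⟦X⟧} {a : R}

theorem coeff_succ_of_mul_derivative_eq (h : (1 + C a * X) * d⁄dX R f = 1 + f) (k : ℕ) :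
    ((k : R) + 1) * coeff (k + 1) f + a * coeff k (X * d⁄dX R f)
      = coeff k (1 : R⟦X⟧) + coeff k f := by
  have := congrArg (coeff k) h
  rwa [add_mul, one_mul, mul_assoc, map_add, map_add, coeff_C_mul, coeff_derivative,
    mul_comm] at this

theorem coeff_one_of_mul_derivative_eq (h : (1 + C a * X) * d⁄dX R f = 1 + f) :
    coeff 1 f = 1 + constantCoeff f := by
  simpa [coeff_zero_X_mul] using coeff_succ_of_mul_derivative_eq h 0

theorem coeff_add_two_of_mul_derivative_eq (h : (1 + C a * X) * d⁄dX R f = 1 + f) (k : ℕ) :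
    ((k : R) + 2) * coeff (k + 2) f = (1 - a * ((k : R) + 1)) * coeff (k + 1) f := by
  have := coeff_succ_of_mul_derivative_eq h (k + 1)
  rw [coeff_succ_X_mul, coeff_derivative, coeff_one, if_neg k.succ_ne_zero] at this
  push_cast at this
  linear_combination this

end Coefficients

end PowerSeries

theorem kappa_zero : kappa 0 = 1 := by
  simp [kappa]

theorem kappa_succ (j : ℕ) :
    kappa (j + 1) = 3 * (6 * j + 5) * (3 * j + 1) / ((j + 1) * (2 * j + 3)) * kappa j := by
  have hpoch : Polynomial.eval (3 / 2 : ℚ) (ascPochhammer ℚ j) ≠ 0 :=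
    (ascPochhammer_pos j _ (by norm_num)).ne'
  simp only [kappa, ascPochhammer_succ_eval, Nat.factorial_succ, Nat.cast_mul, Nat.cast_add,
    Nat.cast_one, pow_succ]
  field_simp
  ring

section ChirpRecurrence

variable {c : ℕ → ℚ}
  (hrec : ∀ k : ℕ, ((k : ℚ) + 2) * c (k + 2) = (1 - 3 * ((k : ℚ) + 1)) * c (k + 1))
include hrec

theorem even_eq_of_odd_eq {j : ℕ} (hodd : c (2 * j + 1) = kappa j / 3 ^ j) :
    c (2 * j + 2) = -lambda' j / 3 ^ j := by
  have := hrec (2 * j)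
  rw [hodd] at this
  push_cast at this
  rw [lambda']
  field_simp at this ⊢
  linear_combination (1 / 2 : ℚ) * this

theorem odd_succ_eq_of_even_eq {j : ℕ} (heven : c (2 * j + 2) = -lambda' j / 3 ^ j) :
    c (2 * (j + 1) + 1) = kappa (j + 1) / 3 ^ (j + 1) := by
  have := hrec (2 * j + 1)
  rw [heven, lambda'] at this
  push_cast at this
  rw [show 2 * (j + 1) + 1 = 2 * j + 1 + 2 by ring, kappa_succ, pow_succ]
  field_simp at this ⊢
  linear_combination this

theorem chirp_coeff_eq (h1 : c 1 = 1) (j : ℕ) :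
    c (2 * j + 1) = kappa j / 3 ^ j ∧ c (2 * j + 2) = -lambda' j / 3 ^ j := by
  have hodd : c (2 * j + 1) = kappa j / 3 ^ j := by
    induction j with
    | zero => simpa [kappa_zero] using h1
    | succ j ih => exact odd_succ_eq_of_even_eq hrec (even_eq_of_odd_eq hrec ih)
  exact ⟨hodd, even_eq_of_odd_eq hrec hodd⟩

end ChirpRecurrence

open PowerSeries in
/-- Reversion of the cubic chirp polynomial `y = x + x² + x³/3`: the odd coefficients are
`κ_j/3^j` and the even ones are `-λ_j/3^j`. -/
theorem stmt17 (f : PowerSeries ℚ) (h0 : PowerSeries.constantCoeff (R := ℚ) f = 0)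
    (hf : f + f ^ 2 + PowerSeries.C (R := ℚ) (1 / 3) * f ^ 3 = PowerSeries.X) :
    ∀ j : ℕ,
      PowerSeries.coeff (R := ℚ) (2 * j + 1) f = kappa j / 3 ^ j ∧
      PowerSeries.coeff (R := ℚ) (2 * j + 2) f = -lambda' j / 3 ^ j := by
  have hC : C (1 / 3 : ℚ) * ((3 : ℕ) : ℚ⟦X⟧) = 1 := by
    rw [← map_natCast C, ← map_mul]; norm_num
  have hcube : (1 + f) ^ 3 = 1 + ((3 : ℕ) : ℚ⟦X⟧) * X := by
    linear_combination (3 : ℚ⟦X⟧) * hf - f ^ 3 * hC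
  have hode := mul_derivative_eq_of_pow_eq three_ne_zero hcube
  rw [← map_natCast C] at hode
  refine chirp_coeff_eq (c := fun n => coeff n f) (fun k => ?_) ?_
  · simpa using coeff_add_two_of_mul_derivative_eq hode k
  · simpa [h0] using coeff_one_of_mul_derivative_eq hode
end

section
/- Let f be a formal power series over ℚ with constant coefficient 0 satisfying f + 3f² + 4f³ + 2f⁴ = X, and write c_j for the coefficient of f at degree j. Then c_1 = 1 and j·c_j + 2(4j−5)·c_{j−1} = 0 for all j ≥ 2; equivalently c_j = (−1)^{j+1}·η_j where η_1 = 1 and j·η_j = 2(4j−5)·η_{j−1} (so η = 1, 3, 14, 77, 462, …). -/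
/-!
With `u = 1 + 2f` the equation reads `u⁴ = 1 + 8X`. Differentiating and multiplying by `u` gives
`4 (1 + 8X) u' = 8 u`, i.e. the linear ODE `(1 + 8X) f' = 1 + 2f`, whose coefficients satisfy
the first-order recurrence `(m + 2) c_{m+2} + (8m + 6) c_{m+1} = 0`.
-/

/-- The sequence `η` (OEIS A048779): `η_1 = 1` and `j η_j = 2(4j-5) η_{j-1}`,
so `η = 1, 3, 14, 77, 462, …`. -/
def eta : ℕ → ℚ
  | 0 => 0
  | 1 => 1
  | (j + 2) => 2 * (4 * ((j : ℚ) + 2) - 5) / ((j : ℚ) + 2) * eta (j + 1)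

namespace PowerSeries

variable {R : Type*} [CommRing R]

theorem mul_derivative_pow (u : R⟦X⟧) (k : ℕ) :
    u * d⁄dX R (u ^ k) = k * u ^ k * d⁄dX R u := by
  rcases k with _ | k
  · simp
  · rw [Derivation.leibniz_pow, Nat.add_sub_cancel, smul_eq_mul, nsmul_eq_mul, pow_succ]
    ring

theorem coeff_zero_one_add_C_mul_X_mul_derivative (a : R) (f : R⟦X⟧) :
    coeff 0 ((1 + C a * X) * d⁄dX R f) = coeff 1 f := by
  rw [add_mul, one_mul, mul_assoc, map_add, coeff_C_mul, coeff_zero_X_mul, mul_zero, add_zero,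
    coeff_derivative]
  simp

theorem coeff_succ_one_add_C_mul_X_mul_derivative (a : R) (f : R⟦X⟧) (n : ℕ) :
    coeff (n + 1) ((1 + C a * X) * d⁄dX R f) =
      (n + 2) * coeff (n + 2) f + a * (n + 1) * coeff (n + 1) f := by
  rw [add_mul, one_mul, mul_assoc, map_add, coeff_C_mul, coeff_succ_X_mul, coeff_derivative,
    coeff_derivative]
  push_cast
  ring

end PowerSeries

theorem eq_neg_one_pow_mul_eta (c : ℕ → ℚ) (h1 : c 1 = 1)
    (hrec : ∀ m : ℕ, ((m : ℚ) + 2) * c (m + 2) + (8 * m + 6) * c (m + 1) = 0) :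
    ∀ j, 1 ≤ j → c j = (-1) ^ (j + 1) * eta j := by
  intro j hj
  induction j, hj using Nat.le_induction with
  | base => simp [h1, eta]
  | succ n hn ih =>
    obtain ⟨m, rfl⟩ : ∃ m, n = m + 1 := ⟨n - 1, by omega⟩
    have hm : ((m : ℚ) + 2) ≠ 0 := by positivity
    have hc : c (m + 2) = -(8 * m + 6) / (m + 2) * c (m + 1) := by
      field_simp
      linear_combination hrec m
    rw [hc, ih, eta]
    field_simp
    ring

open PowerSeries in
/-- Reversion of the quartic chirp polynomial `y = x + 3x² + 4x³ + 2x⁴`: the coefficients `c_j`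
satisfy `c_1 = 1`, `j c_j + 2(4j-5) c_{j-1} = 0` for `j ≥ 2`, and `c_j = (-1)^{j+1} η_j`. -/
theorem stmt18 (f : PowerSeries ℚ) (h0 : PowerSeries.constantCoeff f = 0)
    (hf : f + PowerSeries.C (3 : ℚ) * f ^ 2 + PowerSeries.C (4 : ℚ) * f ^ 3 +
        PowerSeries.C (2 : ℚ) * f ^ 4 = PowerSeries.X) :
    PowerSeries.coeff 1 f = 1 ∧
    (∀ j : ℕ, 2 ≤ j →
      (j : ℚ) * PowerSeries.coeff j f +
        2 * (4 * (j : ℚ) - 5) * PowerSeries.coeff (j - 1) f = 0) ∧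
    ∀ j : ℕ, 1 ≤ j → PowerSeries.coeff j f = (-1 : ℚ) ^ (j + 1) * eta j := by
  have hpow : (1 + C 2 * f) ^ 4 = 1 + C 8 * X := by
    simp only [map_ofNat] at hf ⊢
    linear_combination 8 * hf
  have hode : (1 + C 8 * X) * d⁄dX ℚ f = 1 + C 2 * f := by
    have h := mul_derivative_pow (1 + C 2 * f) 4
    rw [hpow] at h
    simp only [map_add, Derivation.leibniz, derivative_X, derivative_C, Derivation.map_one_eq_zero,
      smul_eq_mul] at h
    apply mul_left_cancel₀ (show C (8 : ℚ) ≠ 0 by simp)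
    simp only [map_ofNat] at h ⊢
    linear_combination -h
  have hc1 : coeff 1 f = 1 := by
    have h := congrArg (coeff 0) hode
    rw [coeff_zero_one_add_C_mul_X_mul_derivative] at h
    simpa [h0] using h
  have hrec (m : ℕ) : ((m : ℚ) + 2) * coeff (m + 2) f + (8 * m + 6) * coeff (m + 1) f = 0 := by
    have h := congrArg (coeff (m + 1)) hode
    rw [coeff_succ_one_add_C_mul_X_mul_derivative, map_add, coeff_one, if_neg m.succ_ne_zero,
      coeff_C_mul] at h
    linear_combination h
  refine ⟨hc1, fun j hj => ?_, eq_neg_one_pow_mul_eta (fun j => coeff j f) hc1 hrec⟩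
  obtain ⟨m, rfl⟩ := Nat.exists_eq_add_of_le' hj
  rw [show m + 2 - 1 = m + 1 by omega]
  push_cast
  linear_combination hrec m
end
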